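/- arXiv:math/0206246 — 2 statements merged into one kernel-verified Lean document; each statement's English description precedes it below -/
import Mathlib

section
/- For any labelled binary search tree T, let w_T be the word obtained by the postfix (post-order) reading of T (left subtree, then right subtree, then root). Then P(w_T) = T. -/
namespace Sylv

variable {α : Type*}

/-- Insert a letter into a binary search tree: left on `≤`, right on `>`. -/
def insert [LinearOrder α] (x : α) : BinaryTree α → BinaryTree α
  | BinaryTree.nil => BinaryTree.node x BinaryTree.nil BinaryTree.nil
  | BinaryTree.node a l r =>
      if x ≤ a then BinaryTree.node a (Sylv.insert x l) r else BinaryTree.node a l (Sylv.insert x r)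

/-- The binary search tree `P(w)`, inserting the letters of `w` from right to left. -/
def P [LinearOrder α] (w : List α) : BinaryTree α := w.foldr Sylv.insert BinaryTree.nil

/-- Infix (in-order) reading of a labelled binary tree. -/
def inorder : BinaryTree α → List α
  | BinaryTree.nil => []
  | BinaryTree.node a l r => inorder l ++ a :: inorder r

/-- Postfix (post-order) reading of a labelled binary tree. -/
def postorder : BinaryTree α → List α
  | BinaryTree.nil => []
  | BinaryTree.node a l r => postorder l ++ postorder r ++ [a]

/-- Binary search tree property: left labels `≤` root, right labels `>` root. -/
def IsBST [LinearOrder α] : BinaryTree α → Prop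
  | BinaryTree.nil => True
  | BinaryTree.node a l r =>
      (∀ x ∈ inorder l, x ≤ a) ∧ (∀ x ∈ inorder r, a < x) ∧ IsBST l ∧ IsBST r

/-- Shape (underlying unlabelled tree). -/
def shape : BinaryTree α → BinaryTree Unit
  | BinaryTree.nil => BinaryTree.nil
  | BinaryTree.node _ l r => BinaryTree.node () (shape l) (shape r)

/-- The sylvester congruence: the monoid congruence generated by
`z x u y ≡ x z u y` for letters `x ≤ y < z` and a word `u`. -/
inductive SylvCong [LinearOrder α] : List α → List α → Prop
  | rel (p u q : List α) (x y z : α) (hxy : x ≤ y) (hyz : y < z) :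
      SylvCong (p ++ z :: x :: u ++ y :: q) (p ++ x :: z :: u ++ y :: q)
  | refl (w : List α) : SylvCong w w
  | symm {u v} : SylvCong u v → SylvCong v u
  | trans {u v w} : SylvCong u v → SylvCong v w → SylvCong u w

/-- One rewriting step `x z u y → z x u y` (with `x ≤ y < z`), in any context. -/
inductive SylvStep [LinearOrder α] : List α → List α → Prop
  | step (p u q : List α) (x y z : α) (hxy : x ≤ y) (hyz : y < z) :
      SylvStep (p ++ x :: z :: u ++ y :: q) (p ++ z :: x :: u ++ y :: q)

/-- Standardization of a word: values in `1..n`. -/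
def std [LinearOrder α] [Inhabited α] (w : List α) : List ℕ :=
  (List.range w.length).map (fun i =>
    ((List.range w.length).filter (fun j =>
      w.getD j default < w.getD i default ∨
        (w.getD j default = w.getD i default ∧ j < i))).length + 1)

/-- Inverse of a permutation word of `1..n`. -/
def invPerm (s : List ℕ) : List ℕ :=
  (List.range s.length).map (fun j => s.idxOf (j + 1) + 1)

/-- `w` is a permutation word of `{1,…,n}`. -/
def IsPermWord (n : ℕ) (w : List ℕ) : Prop := w.Perm (List.range' 1 n)

/-- Decreasing tree: every node's label exceeds all labels in its subtrees. -/
def IsDecreasing : BinaryTree ℕ → Prop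
  | BinaryTree.nil => True
  | BinaryTree.node a l r =>
      (∀ x ∈ inorder l, x < a) ∧ (∀ x ∈ inorder r, x < a) ∧ IsDecreasing l ∧ IsDecreasing r

/-- `t` is the decreasing tree of the word `w` (unique when letters are distinct). -/
def IsDecrTreeOf (w : List ℕ) (t : BinaryTree ℕ) : Prop := IsDecreasing t ∧ inorder t = w

/-- Label the nodes of an unlabelled tree in infix order, starting from `k`. -/
def labelFrom : BinaryTree Unit → ℕ → BinaryTree ℕ × ℕ
  | BinaryTree.nil, k => (BinaryTree.nil, k)
  | BinaryTree.node _ l r, k =>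
      let p := labelFrom l k
      let q := labelFrom r (p.2 + 1)
      (BinaryTree.node p.2 p.1 q.1, q.2)

/-- The canonical tree-word `w_T`: postfix reading of `T` labelled in infix order by `1..n`. -/
def treeWord (T : BinaryTree Unit) : List ℕ := postorder (labelFrom T 1).1

/-- Shift all letters of a word by `k`. -/
def shift (k : ℕ) (w : List ℕ) : List ℕ := w.map (· + k)

/-- `IsShuffle u v w` : `w` appears in the shuffle product `u ⧢ v`. -/
inductive IsShuffle : List ℕ → List ℕ → List ℕ → Prop
  | nil : IsShuffle [] [] []
  | left (a : ℕ) {u v w} : IsShuffle u v w → IsShuffle (a :: u) v (a :: w)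
  | right (a : ℕ) {u v w} : IsShuffle u v w → IsShuffle u (a :: v) (a :: w)

/-- A model of the homogeneous components of `FQSym`: formal series on words,
encoded by their coefficient functions. -/
abbrev FQS := List ℕ → ℚ

/-- Product of noncommutative series: convolution over factorizations. -/
noncomputable def mulF (f g : FQS) : FQS := fun w =>
  ∑ i ∈ Finset.range (w.length + 1), f (w.take i) * g (w.drop i)

open Classical in
/-- `F_σ = ∑_{std w = σ⁻¹} w`. -/
noncomputable def Fel (σ : List ℕ) : FQS := fun w =>
  if std w = invPerm σ then 1 else 0

open Classical in
/-- `P_T = ∑_{P(σ) = T} F_σ`. -/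
noncomputable def Pel (T : BinaryTree Unit) : FQS := fun w =>
  if ∃ σ, IsPermWord w.length σ ∧ shape (P σ) = T ∧ std w = invPerm σ then 1 else 0

/-- Inversions (by values) of a permutation word. -/
def InvV (w : List ℕ) : Set (ℕ × ℕ) :=
  {p | p.1 < p.2 ∧ p.1 ∈ w ∧ p.2 ∈ w ∧ w.idxOf p.2 < w.idxOf p.1}

/-- Right weak order on permutation words: inclusion of inversion sets. -/
def weakLe (u v : List ℕ) : Prop := InvV u ⊆ InvV v

/-- Product of hook lengths of a binary tree. -/
def hookProd : BinaryTree Unit → ℕ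
  | BinaryTree.nil => 1
  | BinaryTree.node _ l r => (l.numNodes + r.numNodes + 1) * hookProd l * hookProd r

/-- Major index of a word: sum of descent positions (1-based). -/
def maj (w : List ℕ) : ℕ :=
  ∑ i ∈ Finset.range (w.length - 1),
    if w.getD (i + 1) 0 < w.getD i 0 then i + 1 else 0

/-- `[n]_q` as a polynomial. -/
noncomputable def qInt (n : ℕ) : Polynomial ℚ := ∑ i ∈ Finset.range n, Polynomial.X ^ i

/-- `[n]_q!`. -/
noncomputable def qFact : ℕ → Polynomial ℚ
  | 0 => 1
  | n + 1 => qFact n * qInt (n + 1)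

/-- `∏_{v ∈ T} q^{δ_v} [h_v]_q`. -/
noncomputable def qHook : BinaryTree Unit → Polynomial ℚ
  | BinaryTree.nil => 1
  | BinaryTree.node _ l r =>
      Polynomial.X ^ r.numNodes * qInt (l.numNodes + r.numNodes + 1) * qHook l * qHook r

end Sylv


namespace Sylv
variable {α : Type*} [LinearOrder α]

lemma mem_postorder_iff (t : BinaryTree α) (x : α) : x ∈ postorder t ↔ x ∈ inorder t := by
  induction t with
  | nil => simp [postorder, inorder]
  | node a l r ihl ihr =>
    simp [postorder, inorder, ihl, ihr]; tauto

lemma foldr_gt (a : α) (l r : BinaryTree α) (w : List α) (h : ∀ x ∈ w, a < x) :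
    w.foldr Sylv.insert (BinaryTree.node a l r) = BinaryTree.node a l (w.foldr Sylv.insert r) := by
  induction w with
  | nil => rfl
  | cons b w ih =>
    have hb : a < b := h b (by simp)
    simp only [List.foldr_cons, ih (fun x hx => h x (by simp [hx]))]
    simp [Sylv.insert, not_le.mpr hb]

lemma foldr_le (a : α) (l r : BinaryTree α) (w : List α) (h : ∀ x ∈ w, x ≤ a) :
    w.foldr Sylv.insert (BinaryTree.node a l r) = BinaryTree.node a (w.foldr Sylv.insert l) r := by
  induction w with
  | nil => rfl
  | cons b w ih =>
    have hb : b ≤ a := h b (by simp)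
    simp only [List.foldr_cons, ih (fun x hx => h x (by simp [hx]))]
    simp [Sylv.insert, hb]

end Sylv


/-- inserting the postfix reading of a binary search tree recovers it. -/

theorem stmt4 {α : Type*} [LinearOrder α] (t : BinaryTree α) (ht : Sylv.IsBST t) :
    Sylv.P (Sylv.postorder t) = t := by
  induction t with
  | nil => rfl
  | node a l r ihl ihr =>
    obtain ⟨hl, hr, hbl, hbr⟩ := ht
    have hrP : Sylv.P (Sylv.postorder r) = r := ihr hbr
    have hlP : Sylv.P (Sylv.postorder l) = l := ihl hbl
    show (Sylv.postorder (BinaryTree.node a l r)).foldr Sylv.insert BinaryTree.nil = _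
    rw [Sylv.postorder, List.append_assoc, List.foldr_append, List.foldr_append]
    have h1 : ([a] : List α).foldr Sylv.insert BinaryTree.nil = BinaryTree.node a BinaryTree.nil BinaryTree.nil := rfl
    rw [h1, Sylv.foldr_gt a _ _ _ (fun x hx => hr x ((Sylv.mem_postorder_iff r x).mp hx)),
        Sylv.foldr_le a _ _ _ (fun x hx => hl x ((Sylv.mem_postorder_iff l x).mp hx))]
    show BinaryTree.node a (Sylv.P (Sylv.postorder l)) (Sylv.P (Sylv.postorder r)) = _
    rw [hlP, hrP]
end

section
/- Every sylvester class of words is generated from its minimal element w_T by iterating the rewriting rules x z u y → z x u y (with letters x ≤ y < z and u an arbitrary word): the set of words reachable from w_T by these rewritings equals the full set of words v with P(v) = T. -/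
/-!
A rewriting step preserves `P`: in `x z u y ↦ z x u y` the letter `y` is inserted before `x` and
`z`, and since `x ≤ y < z` it sends them into different subtrees, so their insertions commute.

Conversely, call `v` irreducible when it contains no factor `z x u y` with `x ≤ y < z`. If `v` ends
with the letter `a`, irreducibility forbids a letter `> a` immediately followed by a letter `≤ a`,
so `v = s b a` with `s ≤ a < b`; then `P v` has root `a` and subtrees `P s`, `P b`, and by
induction `v` is the postfix reading of `P v`. A step strictly increases the number of
inversions, so undoing steps from any `v` ends at an irreducible word with the same tree, which
is therefore `postorder (P v)`.
-/

namespace Sylv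

variable {α : Type*} [LinearOrder α]

theorem mem_inorder_insert {a x : α} {T : BinaryTree α} :
    a ∈ inorder (Sylv.insert x T) ↔ a = x ∨ a ∈ inorder T := by
  induction T with
  | nil => simp [Sylv.insert, inorder]
  | node b l r ihl ihr =>
    by_cases h : x ≤ b <;> simp [Sylv.insert, h, inorder, ihl, ihr] <;> tauto

theorem isBST_insert (x : α) {T : BinaryTree α} (h : IsBST T) : IsBST (Sylv.insert x T) := by
  induction T with
  | nil => simp [Sylv.insert, IsBST, inorder]
  | node b l r ihl ihr =>
    obtain ⟨hl, hr, hbl, hbr⟩ := h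
    by_cases hx : x ≤ b
    · simp only [Sylv.insert, if_pos hx]
      exact ⟨fun c hc => (mem_inorder_insert.1 hc).elim (fun e => e ▸ hx) (hl c),
        hr, ihl hbl, hbr⟩
    · simp only [Sylv.insert, if_neg hx]
      exact ⟨hl, fun c hc => (mem_inorder_insert.1 hc).elim
        (fun e => e ▸ lt_of_not_ge hx) (hr c), hbl, ihr hbr⟩

theorem isBST_P (w : List α) : IsBST (P w) := by
  induction w with
  | nil => trivial
  | cons a w ih => exact isBST_insert a ih

theorem mem_inorder_P {a : α} {w : List α} (h : a ∈ w) : a ∈ inorder (P w) := by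
  induction w with
  | nil => simp at h
  | cons b w ih =>
    rcases List.mem_cons.1 h with rfl | h
    · exact mem_inorder_insert.2 (Or.inl rfl)
    · exact mem_inorder_insert.2 (Or.inr (ih h))

theorem mem_postorder_iff_mem_inorder {a : α} {T : BinaryTree α} :
    a ∈ postorder T ↔ a ∈ inorder T := by
  induction T with
  | nil => simp [postorder, inorder]
  | node b l r ihl ihr =>
    simp only [postorder, inorder, List.mem_append, List.mem_cons, ihl, ihr]
    tauto

/-- The letter `y` forces `x` and `z` to part ways at some node of `T`, instead of both reaching
the same empty leaf. -/
theorem insert_insert_comm {x y z : α} {T : BinaryTree α} (hT : IsBST T) (hxy : x ≤ y)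
    (hyz : y < z) (hy : y ∈ inorder T) :
    Sylv.insert x (Sylv.insert z T) = Sylv.insert z (Sylv.insert x T) := by
  induction T with
  | nil => simp [inorder] at hy
  | node b l r ihl ihr =>
    obtain ⟨hl, hr, hbl, hbr⟩ := hT
    simp only [inorder, List.mem_append, List.mem_cons] at hy
    by_cases hz : z ≤ b
    · have hyl : y ∈ inorder l := by
        rcases hy with hy | rfl | hy
        · exact hy
        · exact absurd (hyz.trans_le hz) (lt_irrefl _)
        · exact absurd ((hr y hy).trans hyz) (not_lt.2 hz)
      simp only [Sylv.insert, if_pos hz, if_pos ((hxy.trans hyz.le).trans hz), ihl hbl hyl]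
    · by_cases hx : x ≤ b
      · simp only [Sylv.insert, if_neg hz, if_pos hx]
      · have hyr : y ∈ inorder r := by
          rcases hy with hy | rfl | hy
          · exact absurd (hl y hy) (not_le.2 ((lt_of_not_ge hx).trans_le hxy))
          · exact absurd hxy hx
          · exact hy
        simp only [Sylv.insert, if_neg hz, if_neg hx, ihr hbr hyr]

theorem P_append (u v : List α) : P (u ++ v) = List.foldr Sylv.insert (P v) u :=
  List.foldr_append

theorem P_eq_of_sylvStep {v w : List α} (h : SylvStep v w) : P v = P w := by
  obtain ⟨p, u, q, x, y, z, hxy, hyz⟩ := h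
  have hcomm := insert_insert_comm (isBST_P (u ++ y :: q)) hxy hyz (mem_inorder_P (by simp))
  simp only [List.append_assoc, List.cons_append]
  rw [P_append, P_append]
  exact congrArg (List.foldr Sylv.insert · p) hcomm

theorem foldr_insert_node_of_forall_gt {a : α} {L R : BinaryTree α} {w : List α}
    (h : ∀ x ∈ w, a < x) :
    List.foldr Sylv.insert (BinaryTree.node a L R) w
      = BinaryTree.node a L (List.foldr Sylv.insert R w) := by
  induction w with
  | nil => rfl
  | cons c w ih =>
    simp only [List.foldr_cons, ih (fun x hx => h x (List.mem_cons_of_mem _ hx))]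
    simp [Sylv.insert, not_le.2 (h c List.mem_cons_self)]

theorem foldr_insert_node_of_forall_le {a : α} {L R : BinaryTree α} {w : List α}
    (h : ∀ x ∈ w, x ≤ a) :
    List.foldr Sylv.insert (BinaryTree.node a L R) w
      = BinaryTree.node a (List.foldr Sylv.insert L w) R := by
  induction w with
  | nil => rfl
  | cons c w ih =>
    simp only [List.foldr_cons, ih (fun x hx => h x (List.mem_cons_of_mem _ hx))]
    simp [Sylv.insert, h c List.mem_cons_self]

theorem P_append_append_singleton {s b : List α} {a : α} (hs : ∀ x ∈ s, x ≤ a)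
    (hb : ∀ x ∈ b, a < x) : P (s ++ b ++ [a]) = BinaryTree.node a (P s) (P b) := by
  rw [List.append_assoc, P_append, P_append,
    show P [a] = BinaryTree.node a BinaryTree.nil BinaryTree.nil from rfl,
    foldr_insert_node_of_forall_gt hb, foldr_insert_node_of_forall_le hs]
  rfl

theorem P_postorder {t : BinaryTree α} (ht : IsBST t) : P (postorder t) = t := by
  induction t with
  | nil => rfl
  | node a l r ihl ihr =>
    obtain ⟨hl, hr, hbl, hbr⟩ := ht
    have hl' : ∀ x ∈ postorder l, x ≤ a := fun x hx => hl x (mem_postorder_iff_mem_inorder.1 hx)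
    have hr' : ∀ x ∈ postorder r, a < x := fun x hx => hr x (mem_postorder_iff_mem_inorder.1 hx)
    rw [postorder, P_append_append_singleton hl' hr', ihl hbl, ihr hbr]

theorem P_eq_of_reflTransGen {v w : List α} (h : Relation.ReflTransGen SylvStep v w) :
    P v = P w := by
  induction h with
  | refl => rfl
  | tail _ hstep ih => exact ih.trans (P_eq_of_sylvStep hstep)

def numInversions : List α → ℕ
  | [] => 0
  | a :: s => (s.filter (· < a)).length + numInversions s

theorem numInversions_swap (p s : List α) {x z : α} (h : x < z) :
    numInversions (p ++ z :: x :: s) = numInversions (p ++ x :: z :: s) + 1 := by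
  induction p with
  | nil =>
    have e1 : (x :: s).filter (· < z) = x :: s.filter (· < z) :=
      List.filter_cons_of_pos (by simpa using h)
    have e2 : (z :: s).filter (· < x) = s.filter (· < x) :=
      List.filter_cons_of_neg (by simpa using asymm h)
    simp only [List.nil_append, numInversions, e1, e2, List.length_cons]
    omega
  | cons c p ih =>
    have hperm : ((p ++ z :: x :: s).filter (· < c)).length
        = ((p ++ x :: z :: s).filter (· < c)).length :=
      ((List.Perm.append_left p (List.Perm.swap x z s)).filter _).length_eq
    simp only [List.cons_append, numInversions, ih, hperm]
    omega

theorem numInversions_lt_of_sylvStep {v w : List α} (h : SylvStep v w) :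
    numInversions v < numInversions w := by
  obtain ⟨p, u, q, x, y, z, hxy, hyz⟩ := h
  simp only [List.append_assoc, List.cons_append,
    numInversions_swap p (u ++ y :: q) (hxy.trans_lt hyz)]
  omega

def IsReducible (v : List α) : Prop :=
  ∃ p u q x y z, x ≤ y ∧ y < z ∧ v = p ++ z :: x :: u ++ y :: q

theorem exists_adjacent_gt_le {a c : α} (hc : a < c) :
    ∀ {w : List α}, (∃ x ∈ w, x ≤ a) →
      ∃ p z x q, c :: w = p ++ z :: x :: q ∧ x ≤ a ∧ a < z := by
  intro w
  induction w generalizing c with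
  | nil => rintro ⟨x, hx, -⟩; simp at hx
  | cons d w ih =>
    intro hx
    by_cases hd : d ≤ a
    · exact ⟨[], c, d, w, rfl, hd, hc⟩
    · obtain ⟨x, hx, hxa⟩ := hx
      have hxw : x ∈ w := (List.mem_cons.1 hx).resolve_left (by rintro rfl; exact hd hxa)
      obtain ⟨p, z, x', q, he, hx'a, hz⟩ := ih (lt_of_not_ge hd) ⟨x, hxw, hxa⟩
      exact ⟨c :: p, z, x', q, by rw [List.cons_append, ← he], hx'a, hz⟩

theorem exists_split_of_not_isReducible {a : α} {v : List α} (h : ¬ IsReducible (v ++ [a])) :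
    ∃ s b, v = s ++ b ∧ (∀ x ∈ s, x ≤ a) ∧ (∀ x ∈ b, a < x) := by
  induction v with
  | nil => exact ⟨[], [], rfl, by simp, by simp⟩
  | cons c w ih =>
    by_cases hc : c ≤ a
    · obtain ⟨s, b, rfl, hs, hb⟩ := ih fun ⟨p, u, q, x, y, z, hxy, hyz, he⟩ =>
        h ⟨c :: p, u, q, x, y, z, hxy, hyz, by simp [he]⟩
      exact ⟨c :: s, b, rfl, List.forall_mem_cons.2 ⟨hc, hs⟩, hb⟩
    · refine ⟨[], c :: w, rfl, by simp, fun x hx => ?_⟩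
      by_contra hxa
      have hex : ∃ x ∈ w, x ≤ a :=
        ⟨x, (List.mem_cons.1 hx).resolve_left (by rintro rfl; exact hc (not_lt.1 hxa)),
          not_lt.1 hxa⟩
      obtain ⟨p, z, x', q, he, hx'a, hz⟩ := exists_adjacent_gt_le (lt_of_not_ge hc) hex
      exact h ⟨p, q, [], x', a, z, hx'a, hz, by simp [he]⟩

theorem postorder_P_of_not_isReducible (v : List α) (h : ¬ IsReducible v) :
    postorder (P v) = v := by
  rcases List.eq_nil_or_concat v with rfl | ⟨v', a, rfl⟩
  · rfl
  rw [List.concat_eq_append] at h ⊢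
  obtain ⟨s, b, rfl, hs, hb⟩ := exists_split_of_not_isReducible h
  have hs' : ¬ IsReducible s := fun ⟨p, u, q, x, y, z, hxy, hyz, he⟩ =>
    h ⟨p, u, q ++ b ++ [a], x, y, z, hxy, hyz, by simp [he]⟩
  have hb' : ¬ IsReducible b := fun ⟨p, u, q, x, y, z, hxy, hyz, he⟩ =>
    h ⟨s ++ p, u, q ++ [a], x, y, z, hxy, hyz, by simp [he]⟩
  rw [P_append_append_singleton hs hb, postorder, postorder_P_of_not_isReducible s hs',
    postorder_P_of_not_isReducible b hb']
termination_by v.length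
decreasing_by all_goals subst_vars; simp <;> omega

theorem reflTransGen_postorder_P (v : List α) :
    Relation.ReflTransGen SylvStep (postorder (P v)) v := by
  by_cases hv : IsReducible v
  · obtain ⟨p, u, q, x, y, z, hxy, hyz, hv⟩ := hv
    have hstep : SylvStep (p ++ x :: z :: u ++ y :: q) v := hv ▸ .step p u q x y z hxy hyz
    have hdecr := numInversions_lt_of_sylvStep hstep
    rw [← P_eq_of_sylvStep hstep]
    exact (reflTransGen_postorder_P _).tail hstep
  · rw [postorder_P_of_not_isReducible v hv]
termination_by numInversions v
decreasing_by simpa using hdecr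

end Sylv

/-- the sylvester class of `T` is generated from `w_T` by the rewriting
rules `x z u y → z x u y`. -/
theorem stmt6 {α : Type*} [LinearOrder α] (t : BinaryTree α) (ht : Sylv.IsBST t) (v : List α) :
    Relation.ReflTransGen Sylv.SylvStep (Sylv.postorder t) v ↔ Sylv.P v = t := by
  constructor
  · intro h
    rw [← Sylv.P_eq_of_reflTransGen h, Sylv.P_postorder ht]
  · rintro rfl
    exact Sylv.reflTransGen_postorder_P v
end
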